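/- arXiv:2003.01546 — 2 statements merged into one kernel-verified Lean document; each statement's English description precedes it below -/
import Mathlib

section
/- In the corrector setting, suppose x₊, s₊, s̃₊ ∈ ℝⁿ with ⟨x₊, s̃₊⟩ = ν where ν ≥ 1, τ₊, κ₊ > 0, W₊ is a symmetric n×n matrix with W₊·x₊ = s₊, μ₊ := ⟨x₊, s₊⟩/ν, and Δz = (Δy, Δx, Δτ, Δs, Δκ) satisfies G(Δz) = 0, τ₊·Δκ + κ₊·Δτ = 0, and W₊·Δx + Δs = μ₊·s̃₊ − s₊. Then: (i) ⟨x₊, Δs⟩ + ⟨Δx, s₊⟩ = 0; (ii) ⟨Δx, Δs⟩ + Δτ·Δκ = 0; and (iii) ⟨x₊ + Δx, s₊ + Δs⟩ + (τ₊ + Δτ)·(κ₊ + Δκ) = ⟨x₊, s₊⟩ + τ₊·κ₊. -/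
open Matrix

/-
The Newton system makes the direction `Δz` lie in the kernel of the skew-symmetric
homogeneous model, so `⟨Δx, Δs⟩ + Δτ Δκ = 0`. The scaling equation, paired with `x₊`,
together with `W₊ x₊ = s₊` and symmetry of `W₊`, gives `⟨x₊, Δs⟩ + ⟨Δx, s₊⟩ = μ₊ ν − ⟨x₊, s₊⟩ = 0`,
and the linearised `τκ`-equation kills the remaining first-order terms of the complementarity gap.
-/

/-- The residual map of the homogeneous self-dual model:
`G(y, x, τ, s, κ) = (A x − τ b, −Aᵀ y + τ c − s, ⟨b,y⟩ − ⟨c,x⟩ − κ)`. -/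
def Gres {m n : ℕ} (A : Matrix (Fin m) (Fin n) ℝ) (b : Fin m → ℝ) (c : Fin n → ℝ)
    (y : Fin m → ℝ) (x : Fin n → ℝ) (τ : ℝ) (s : Fin n → ℝ) (κ : ℝ) :
    (Fin m → ℝ) × (Fin n → ℝ) × ℝ :=
  (A *ᵥ x - τ • b, -(Aᵀ *ᵥ y) + τ • c - s, b ⬝ᵥ y - c ⬝ᵥ x - κ)

theorem Matrix.IsSymm.dotProduct_mulVec_comm {R ι : Type*} [Fintype ι] [CommSemiring R]
    {W : Matrix ι ι R} (hW : W.IsSymm) (x y : ι → R) :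
    x ⬝ᵥ (W *ᵥ y) = (W *ᵥ x) ⬝ᵥ y := by
  rw [dotProduct_mulVec, ← mulVec_transpose, hW.eq, dotProduct_comm]

theorem dotProduct_add_mul_eq_zero_of_gres_eq_zero {m n : ℕ} {A : Matrix (Fin m) (Fin n) ℝ}
    {b : Fin m → ℝ} {c : Fin n → ℝ} {y : Fin m → ℝ} {x : Fin n → ℝ} {τ : ℝ} {s : Fin n → ℝ}
    {κ : ℝ} (hG : Gres A b c y x τ s κ = 0) :
    x ⬝ᵥ s + τ * κ = 0 := by
  simp only [Gres, Prod.mk_eq_zero, sub_eq_zero] at hG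
  obtain ⟨hAx, rfl, rfl⟩ := hG
  have hAxy : x ⬝ᵥ (Aᵀ *ᵥ y) = τ * b ⬝ᵥ y := by
    rw [dotProduct_mulVec, vecMul_transpose, hAx, smul_dotProduct, smul_eq_mul]
  simp only [dotProduct_add, dotProduct_neg, dotProduct_smul, hAxy, smul_eq_mul,
    dotProduct_comm x c]
  ring

theorem dotProduct_add_dotProduct_eq_zero_of_mulVec_add_eq {K ι : Type*} [Fintype ι] [Field K]
    {W : Matrix ι ι K} (hW : W.IsSymm) {x s s' Δx Δs : ι → K} {ν : K} (hν : ν ≠ 0)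
    (hxs' : x ⬝ᵥ s' = ν) (hWx : W *ᵥ x = s)
    (hΔ : W *ᵥ Δx + Δs = (x ⬝ᵥ s / ν) • s' - s) :
    x ⬝ᵥ Δs + Δx ⬝ᵥ s = 0 := by
  have hΔs : Δs = (x ⬝ᵥ s / ν) • s' - s - W *ᵥ Δx := by
    rw [← hΔ]; abel
  rw [hΔs, dotProduct_sub, dotProduct_sub, dotProduct_smul, hxs', hW.dotProduct_mulVec_comm,
    hWx, smul_eq_mul, div_mul_cancel₀ _ hν, dotProduct_comm Δx]
  ring

theorem stmt14_general {m n : ℕ} (A : Matrix (Fin m) (Fin n) ℝ) (b : Fin m → ℝ) (c : Fin n → ℝ)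
    (ν : ℝ) (hν : 1 ≤ ν)
    (xp sp stp : Fin n → ℝ) (hxst : xp ⬝ᵥ stp = ν)
    (τp κp : ℝ)
    (Wp : Matrix (Fin n) (Fin n) ℝ) (hWsymm : Wp.IsSymm) (hWx : Wp *ᵥ xp = sp)
    (μp : ℝ) (hμp : μp = xp ⬝ᵥ sp / ν)
    (Δy : Fin m → ℝ) (Δx : Fin n → ℝ) (Δτ : ℝ) (Δs : Fin n → ℝ) (Δκ : ℝ)
    (hG : Gres A b c Δy Δx Δτ Δs Δκ = 0)
    (hτκ : τp * Δκ + κp * Δτ = 0)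
    (hxs : Wp *ᵥ Δx + Δs = μp • stp - sp) :
    xp ⬝ᵥ Δs + Δx ⬝ᵥ sp = 0 ∧
    Δx ⬝ᵥ Δs + Δτ * Δκ = 0 ∧
    (xp + Δx) ⬝ᵥ (sp + Δs) + (τp + Δτ) * (κp + Δκ) = xp ⬝ᵥ sp + τp * κp := by
  subst hμp
  have hfirst : xp ⬝ᵥ Δs + Δx ⬝ᵥ sp = 0 :=
    dotProduct_add_dotProduct_eq_zero_of_mulVec_add_eq hWsymm (by linarith) hxst hWx hxs
  have hsecond : Δx ⬝ᵥ Δs + Δτ * Δκ = 0 := dotProduct_add_mul_eq_zero_of_gres_eq_zero hG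
  refine ⟨hfirst, hsecond, ?_⟩
  simp only [add_dotProduct, dotProduct_add]
  linear_combination hfirst + hsecond + hτκ

/-- Basic identities for the corrector direction. -/
theorem stmt14 {m n : ℕ} (A : Matrix (Fin m) (Fin n) ℝ) (b : Fin m → ℝ) (c : Fin n → ℝ)
    (ν : ℝ) (hν : 1 ≤ ν)
    (xp sp stp : Fin n → ℝ) (hxst : xp ⬝ᵥ stp = ν)
    (τp κp : ℝ) (hτ : 0 < τp) (hκ : 0 < κp)
    (Wp : Matrix (Fin n) (Fin n) ℝ) (hWsymm : Wp.IsSymm) (hWx : Wp *ᵥ xp = sp)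
    (μp : ℝ) (hμp : μp = xp ⬝ᵥ sp / ν)
    (Δy : Fin m → ℝ) (Δx : Fin n → ℝ) (Δτ : ℝ) (Δs : Fin n → ℝ) (Δκ : ℝ)
    (hG : Gres A b c Δy Δx Δτ Δs Δκ = 0)
    (hτκ : τp * Δκ + κp * Δτ = 0)
    (hxs : Wp *ᵥ Δx + Δs = μp • stp - sp) :
    xp ⬝ᵥ Δs + Δx ⬝ᵥ sp = 0 ∧
    Δx ⬝ᵥ Δs + Δτ * Δκ = 0 ∧
    (xp + Δx) ⬝ᵥ (sp + Δs) + (τp + Δτ) * (κp + Δκ) = xp ⬝ᵥ sp + τp * κp :=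
  stmt14_general A b c ν hν xp sp stp hxst τp κp Wp hWsymm hWx μp hμp Δy Δx Δτ Δs Δκ hG hτκ hxs
end

section
/- Suppose x₊, s₊, x̃₊, s̃₊ ∈ ℝⁿ, ν ≥ 1, τ₊, κ₊ > 0, W₊ is a symmetric positive definite n×n matrix with W₊·x₊ = s₊ and W₊·x̃₊ = s̃₊, μ₊ := ⟨x₊, s₊⟩/ν, and δP₊ := x₊ − μ₊·x̃₊. Suppose Δx, Δs ∈ ℝⁿ and Δτ, Δκ ∈ ℝ satisfy W₊·Δx + Δs = μ₊·s̃₊ − s₊, τ₊·Δκ + κ₊·Δτ = 0, and ⟨Δx, Δs⟩ + Δτ·Δκ = 0. Then (τ₊ + Δτ)·(κ₊ + Δκ) ≥ τ₊·κ₊ − (1/2)·‖δP₊‖_{W₊}², where ‖v‖_{W₊} := √(vᵀW₊v). Moreover, if τ₊·κ₊ − (1/2)·‖δP₊‖_{W₊}² > 0, then τ₊ + Δτ > 0 and κ₊ + Δκ > 0. -/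
open Matrix

/-- The norm induced by a (positive definite) matrix `P`: `‖v‖_P = √(vᵀ P v)`. -/
noncomputable def vnorm {n : ℕ} (P : Matrix (Fin n) (Fin n) ℝ) (v : Fin n → ℝ) : ℝ :=
  Real.sqrt (v ⬝ᵥ (P *ᵥ v))

/-- The operator norm `‖Q‖_P = sup {‖Q u‖_{P⁻¹} : ‖u‖_P ≤ 1}`. -/
noncomputable def opNorm {n : ℕ} (P Q : Matrix (Fin n) (Fin n) ℝ) : ℝ :=
  sSup ((fun u => vnorm P⁻¹ (Q *ᵥ u)) '' {u : Fin n → ℝ | vnorm P u ≤ 1})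

/-- The Loewner order: `Loewner P Q` means `P ⪯ Q`, i.e. `Q - P` is positive semidefinite. -/
def Loewner {n : ℕ} (P Q : Matrix (Fin n) (Fin n) ℝ) : Prop :=
  (Q - P).PosSemidef

/-!
Since `W₊ δP₊ = s₊ − μ₊ s̃₊`, the first corrector equation reads `Δs = −W₊ (Δx + δP₊)`, and the
other two give `(τ₊ + Δτ)(κ₊ + Δκ) = τ₊κ₊ − ⟨Δx, Δs⟩ = τ₊κ₊ + Δxᵀ W₊ (Δx + δP₊)`; completing the
square bounds the last term below by `−½ ‖δP₊‖²_{W₊}`. For positivity, the two factors have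
positive product while `κ₊ (τ₊ + Δτ) + τ₊ (κ₊ + Δκ) = 2 τ₊κ₊ > 0`.
-/

lemma vnorm_sq {n : ℕ} {P : Matrix (Fin n) (Fin n) ℝ} (hP : P.PosSemidef) (v : Fin n → ℝ) :
    vnorm P v ^ 2 = v ⬝ᵥ (P *ᵥ v) :=
  Real.sq_sqrt (hP.dotProduct_mulVec_nonneg v)

namespace Matrix.PosSemidef

variable {ι : Type*} [Fintype ι] {W : Matrix ι ι ℝ}

lemma dotProduct_mulVec_comm (hW : W.PosSemidef) (u v : ι → ℝ) :
    u ⬝ᵥ (W *ᵥ v) = v ⬝ᵥ (W *ᵥ u) := by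
  rw [dotProduct_mulVec, ← mulVec_transpose, (isHermitian_iff_isSymm.mp hW.isHermitian).eq,
    dotProduct_comm]

/-- `2 uᵀW(u + v) + vᵀWv = uᵀWu + (u + v)ᵀW(u + v)`, a sum of two nonnegative terms. -/
lemma neg_half_le_dotProduct_mulVec_add (hW : W.PosSemidef) (u v : ι → ℝ) :
    -(1 / 2) * (v ⬝ᵥ (W *ᵥ v)) ≤ u ⬝ᵥ (W *ᵥ (u + v)) := by
  have hu := hW.dotProduct_mulVec_nonneg u
  have huv := hW.dotProduct_mulVec_nonneg (u + v)
  simp only [star_trivial, mulVec_add, dotProduct_add, add_dotProduct,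
    hW.dotProduct_mulVec_comm v u] at hu huv ⊢
  linarith

end Matrix.PosSemidef

lemma pos_and_pos_of_mul_pos_of_add_pos {a b p q : ℝ} (hp : 0 ≤ p) (hq : 0 ≤ q)
    (hab : 0 < a * b) (hsum : 0 < p * a + q * b) : 0 < a ∧ 0 < b := by
  rcases mul_pos_iff.mp hab with h | ⟨ha, hb⟩
  · exact h
  · nlinarith

theorem stmt16_general {n : ℕ}
    (xp sp xtp stp Δx Δs : Fin n → ℝ) (τp κp Δτ Δκ : ℝ) (hτ : 0 < τp) (hκ : 0 < κp)
    (Wp : Matrix (Fin n) (Fin n) ℝ) (hWpd : Wp.PosDef)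
    (hWx : Wp *ᵥ xp = sp) (hWxt : Wp *ᵥ xtp = stp)
    (μp : ℝ)
    (δPp : Fin n → ℝ) (hδPp : δPp = xp - μp • xtp)
    (hdir1 : Wp *ᵥ Δx + Δs = μp • stp - sp)
    (hdir2 : τp * Δκ + κp * Δτ = 0)
    (hdir3 : Δx ⬝ᵥ Δs + Δτ * Δκ = 0) :
    τp * κp - (1 / 2) * vnorm Wp δPp ^ 2 ≤ (τp + Δτ) * (κp + Δκ) ∧
    (0 < τp * κp - (1 / 2) * vnorm Wp δPp ^ 2 → 0 < τp + Δτ ∧ 0 < κp + Δκ) := by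
  have hW := hWpd.posSemidef
  have hΔs : Δs = -(Wp *ᵥ (Δx + δPp)) := by
    rw [mulVec_add, hδPp, mulVec_sub, mulVec_smul, hWx, hWxt, neg_add, neg_sub, ← hdir1]
    abel
  have hprod : (τp + Δτ) * (κp + Δκ) = τp * κp + Δx ⬝ᵥ (Wp *ᵥ (Δx + δPp)) := by
    rw [hΔs, dotProduct_neg] at hdir3
    linear_combination hdir2 + hdir3
  have hbound : τp * κp - (1 / 2) * vnorm Wp δPp ^ 2 ≤ (τp + Δτ) * (κp + Δκ) := by
    rw [hprod, vnorm_sq hW]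
    linarith [hW.neg_half_le_dotProduct_mulVec_add Δx δPp]
  refine ⟨hbound, fun hpos => pos_and_pos_of_mul_pos_of_add_pos hκ.le hτ.le
    (hpos.trans_le hbound) ?_⟩
  linarith [mul_pos hτ hκ]

/-- Corrector bound on the homogenization variables:
`(τ₊ + Δτ)(κ₊ + Δκ) ≥ τ₊κ₊ − (1/2)‖δP₊‖_{W₊}²`, with positivity when the bound is positive. -/
theorem stmt16 {n : ℕ} (ν : ℝ) (hν : 1 ≤ ν)
    (xp sp xtp stp Δx Δs : Fin n → ℝ) (τp κp Δτ Δκ : ℝ) (hτ : 0 < τp) (hκ : 0 < κp)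
    (Wp : Matrix (Fin n) (Fin n) ℝ) (hWsymm : Wp.IsSymm) (hWpd : Wp.PosDef)
    (hWx : Wp *ᵥ xp = sp) (hWxt : Wp *ᵥ xtp = stp)
    (μp : ℝ) (hμp : μp = xp ⬝ᵥ sp / ν)
    (δPp : Fin n → ℝ) (hδPp : δPp = xp - μp • xtp)
    (hdir1 : Wp *ᵥ Δx + Δs = μp • stp - sp)
    (hdir2 : τp * Δκ + κp * Δτ = 0)
    (hdir3 : Δx ⬝ᵥ Δs + Δτ * Δκ = 0) :
    τp * κp - (1 / 2) * vnorm Wp δPp ^ 2 ≤ (τp + Δτ) * (κp + Δκ) ∧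
    (0 < τp * κp - (1 / 2) * vnorm Wp δPp ^ 2 → 0 < τp + Δτ ∧ 0 < κp + Δκ) :=
  stmt16_general xp sp xtp stp Δx Δs τp κp Δτ Δκ hτ hκ Wp hWpd hWx hWxt μp δPp hδPp hdir1 hdir2
    hdir3
end
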